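/- Let N ≥ 1, T ≥ 1, and let q(k), k ≥ 0, be an ℕ-valued process on a probability space with q(0) = 0 and q(k+1) = max(q(k) − T, 0) + A(k+1), where for each k the arrival A(k+1) takes values in {0,…,N·T}, is independent of (q(0),…,q(k)), and has mean E[A(k+1)] = Λ·T with Λ < 1. Then for every K ≥ 1, (1/K) ∑_{k=0}^{K−1} E[q(k)] ≤ (N² + 1)·T/(2·(1 − Λ)); in particular the sampled backlog process is strongly stable and its time-averaged expectation grows at most linearly in the frame length T. -/

import Mathlib

open MeasureTheory ProbabilityTheory Filter
open scoped ENNReal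

/-!
Lyapunov drift argument for `V = q²`. Squaring the recursion gives
`q(k+1)² ≤ (q(k) - T)² + 2 A(k+1) q(k) + A(k+1)²`; taking expectations, independence turns
`E[A(k+1) q(k)]` into `Λ T E[q(k)]`, and `A ≤ N T` bounds the last term, so
`E[q(k+1)²] ≤ E[q(k)²] - 2 T (1 - Λ) E[q(k)] + (N² + 1) T²`.
Summing over `k < K` telescopes, and `E[q(K)²] ≥ 0`, `q(0) = 0` leave
`2 T (1 - Λ) ∑_{k<K} E[q(k)] ≤ K (N² + 1) T²`.
-/

theorem Nat.cast_tsub_add_sq_le (q T a : ℕ) :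
    ((q - T + a : ℕ) : ℝ) ^ 2 ≤ (q - T : ℝ) ^ 2 + 2 * a * q + a ^ 2 := by
  have hq : 0 ≤ (q : ℝ) := q.cast_nonneg
  have ha : 0 ≤ (a : ℝ) := a.cast_nonneg
  rcases le_total T q with h | h
  · rw [Nat.cast_add, Nat.cast_sub h]
    nlinarith [(Nat.cast_le (α := ℝ)).2 h]
  · rw [Nat.sub_eq_zero_of_le h, zero_add]
    nlinarith [sq_nonneg ((q : ℝ) - T)]

theorem sum_range_le_of_drift {V x : ℕ → ℝ} {c d : ℝ} (hc : 0 < c) (hV0 : V 0 = 0)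
    (hV : ∀ k, 0 ≤ V k) (hdrift : ∀ k, V (k + 1) ≤ V k - c * x k + d) (K : ℕ) :
    ∑ k ∈ Finset.range K, x k ≤ K * d / c := by
  have htel : ∀ K : ℕ, V K + c * ∑ k ∈ Finset.range K, x k ≤ K * d := by
    intro K
    induction K with
    | zero => simp [hV0]
    | succ K ih =>
      rw [Finset.sum_range_succ, Nat.cast_succ]
      linarith [hdrift K]
  rw [le_div_iff₀ hc]
  linarith [htel K, hV K]

theorem integrable_natCast_of_le {Ω : Type*} [MeasurableSpace Ω] {μ : Measure Ω}
    [IsFiniteMeasure μ] {f : Ω → ℕ} (hf : Measurable f) {C : ℕ} (hC : ∀ ω, f ω ≤ C) :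
    Integrable (fun ω => (f ω : ℝ)) μ :=
  .of_bound (by fun_prop) C (ae_of_all _ fun ω => by simpa using hC ω)

theorem integrable_natCast_mul_of_le {Ω : Type*} [MeasurableSpace Ω] {μ : Measure Ω}
    [IsFiniteMeasure μ] {f g : Ω → ℕ} (hf : Measurable f) (hg : Measurable g) {C D : ℕ}
    (hfC : ∀ ω, f ω ≤ C) (hgD : ∀ ω, g ω ≤ D) :
    Integrable (fun ω => (f ω : ℝ) * g ω) μ := by
  simpa using integrable_natCast_of_le (hf.mul hg) fun ω => Nat.mul_le_mul (hfC ω) (hgD ω)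

theorem lintegral_natCast_eq_ofReal_integral {Ω : Type*} [MeasurableSpace Ω]
    {μ : Measure Ω} {f : Ω → ℕ} (hf : Integrable (fun ω => (f ω : ℝ)) μ) :
    ∫⁻ ω, (f ω : ℝ≥0∞) ∂μ = ENNReal.ofReal (∫ ω, (f ω : ℝ) ∂μ) := by
  rw [ofReal_integral_eq_lintegral_ofReal hf (ae_of_all _ fun ω => (f ω).cast_nonneg)]
  simp

theorem backlog_le_mul {Ω : Type*} {q A : ℕ → Ω → ℕ} {T B : ℕ} (hq0 : ∀ ω, q 0 ω = 0)
    (hAbd : ∀ k ω, A (k + 1) ω ≤ B) (hevol : ∀ k ω, q (k + 1) ω = q k ω - T + A (k + 1) ω)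
    (k : ℕ) (ω : Ω) : q k ω ≤ k * B := by
  induction k with
  | zero => simp [hq0 ω]
  | succ k ih =>
    rw [hevol, Nat.succ_mul]
    exact Nat.add_le_add ((Nat.sub_le _ _).trans ih) (hAbd k ω)

section Backlog

variable {Ω : Type*} [MeasurableSpace Ω] {μ : Measure Ω}

theorem ProbabilityTheory.IndepFun.natCast_comp_last {X : Ω → ℕ} {Y : ℕ → Ω → ℕ} {k : ℕ}
    (h : IndepFun X (fun ω => fun s : Fin (k + 1) => Y s ω) μ) :
    IndepFun (fun ω => (X ω : ℝ)) (fun ω => (Y k ω : ℝ)) μ :=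
  h.comp (φ := fun n : ℕ => (n : ℝ)) (ψ := fun v : Fin (k + 1) → ℕ => (v (Fin.last k) : ℝ))
    measurable_from_top (measurable_from_top.comp (measurable_pi_apply _))

variable [IsProbabilityMeasure μ]

theorem integral_sq_tsub_add_le {Q A : Ω → ℕ} {T B C : ℕ} {m : ℝ} (hQ : Measurable Q)
    (hA : Measurable A) (hQC : ∀ ω, Q ω ≤ C) (hAB : ∀ ω, A ω ≤ B)
    (hind : IndepFun (fun ω => (A ω : ℝ)) (fun ω => (Q ω : ℝ)) μ)
    (hmean : ∫ ω, (A ω : ℝ) ∂μ = m) :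
    ∫ ω, ((Q ω - T + A ω : ℕ) : ℝ) ^ 2 ∂μ
      ≤ ∫ ω, (Q ω : ℝ) ^ 2 ∂μ - 2 * (T - m) * ∫ ω, (Q ω : ℝ) ∂μ + (T ^ 2 + B ^ 2) := by
  have iQ : Integrable (fun ω => (Q ω : ℝ)) μ := integrable_natCast_of_le hQ hQC
  have iA : Integrable (fun ω => (A ω : ℝ)) μ := integrable_natCast_of_le hA hAB
  have iQ2 : Integrable (fun ω => (Q ω : ℝ) ^ 2) μ := by
    simpa only [sq] using integrable_natCast_mul_of_le hQ hQ hQC hQC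
  have iAQ : Integrable (fun ω => (A ω : ℝ) * Q ω) μ :=
    integrable_natCast_mul_of_le hA hQ hAB hQC
  have iQ'2 : Integrable (fun ω => ((Q ω - T + A ω : ℕ) : ℝ) ^ 2) μ := by
    have hm : Measurable fun ω => Q ω - T + A ω := by fun_prop
    have hbd : ∀ ω, Q ω - T + A ω ≤ C + B := fun ω =>
      Nat.add_le_add (tsub_le_self.trans (hQC ω)) (hAB ω)
    simpa only [sq] using integrable_natCast_mul_of_le hm hm hbd hbd
  have hAQ : ∫ ω, (A ω : ℝ) * Q ω ∂μ = m * ∫ ω, (Q ω : ℝ) ∂μ := by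
    rw [← hmean]
    exact hind.integral_mul_eq_mul_integral iA.aestronglyMeasurable iQ.aestronglyMeasurable
  have hpt : ∀ ω, ((Q ω - T + A ω : ℕ) : ℝ) ^ 2
      ≤ (Q ω : ℝ) ^ 2 - 2 * T * Q ω + 2 * ((A ω : ℝ) * Q ω) + (T ^ 2 + B ^ 2) := by
    intro ω
    have hA2 : (A ω : ℝ) ^ 2 ≤ B ^ 2 := by
      gcongr
      exact_mod_cast hAB ω
    nlinarith [Nat.cast_tsub_add_sq_le (Q ω) T (A ω)]
  calc ∫ ω, ((Q ω - T + A ω : ℕ) : ℝ) ^ 2 ∂μ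
      ≤ ∫ ω, ((Q ω : ℝ) ^ 2 - 2 * T * Q ω + 2 * ((A ω : ℝ) * Q ω) + (T ^ 2 + B ^ 2)) ∂μ :=
        integral_mono iQ'2 (by fun_prop) hpt
    _ = _ := by
      rw [integral_add (by fun_prop) (by fun_prop), integral_add (by fun_prop) (by fun_prop),
        integral_sub (by fun_prop) (by fun_prop), integral_const_mul, integral_const_mul, hAQ,
        integral_const]
      simp only [probReal_univ, one_smul]
      ring

theorem sum_integral_backlog_le {q A : ℕ → Ω → ℕ} {N T : ℕ} {Λ : ℝ} (hT : 1 ≤ T) (hΛ : Λ < 1)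
    (hqmeas : ∀ k, Measurable (q k)) (hAmeas : ∀ k, Measurable (A k))
    (hq0 : ∀ ω, q 0 ω = 0) (hAbd : ∀ k ω, A (k + 1) ω ≤ N * T)
    (hAindep : ∀ k, IndepFun (A (k + 1)) (fun ω => fun s : Fin (k + 1) => q (s : ℕ) ω) μ)
    (hAmean : ∀ k, ∫ ω, (A (k + 1) ω : ℝ) ∂μ = Λ * T)
    (hevol : ∀ k ω, q (k + 1) ω = q k ω - T + A (k + 1) ω) (K : ℕ) :
    ∑ k ∈ Finset.range K, ∫ ω, (q k ω : ℝ) ∂μ ≤ K * (((N : ℝ) ^ 2 + 1) * T / (2 * (1 - Λ))) := by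
  have hT0 : (0 : ℝ) < T := by exact_mod_cast hT
  have hdrift : ∀ k, ∫ ω, (q (k + 1) ω : ℝ) ^ 2 ∂μ
      ≤ ∫ ω, (q k ω : ℝ) ^ 2 ∂μ - 2 * T * (1 - Λ) * ∫ ω, (q k ω : ℝ) ∂μ
        + (T ^ 2 + ((N * T : ℕ) : ℝ) ^ 2) := by
    intro k
    have h := integral_sq_tsub_add_le (T := T) (hqmeas k) (hAmeas (k + 1))
      (backlog_le_mul hq0 hAbd hevol k) (hAbd k) (hAindep k).natCast_comp_last (hAmean k)
    simp_rw [← hevol] at h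
    linarith
  calc ∑ k ∈ Finset.range K, ∫ ω, (q k ω : ℝ) ∂μ
      ≤ K * (T ^ 2 + ((N * T : ℕ) : ℝ) ^ 2) / (2 * T * (1 - Λ)) :=
        sum_range_le_of_drift (V := fun k => ∫ ω, (q k ω : ℝ) ^ 2 ∂μ)
          (mul_pos (by positivity) (sub_pos.2 hΛ)) (by simp [hq0])
          (fun k => integral_nonneg fun ω => sq_nonneg _) hdrift K
    _ = K * (((N : ℝ) ^ 2 + 1) * T / (2 * (1 - Λ))) := by
      have : (1 : ℝ) - Λ ≠ 0 := by linarith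
      field_simp
      push_cast
      ring

end Backlog

theorem ENNReal.sum_ofReal_div_le {x : ℕ → ℝ} (hx : ∀ k, 0 ≤ x k) {b : ℝ} {K : ℕ}
    (h : ∑ k ∈ Finset.range K, x k ≤ K * b) :
    (∑ k ∈ Finset.range K, ENNReal.ofReal (x k)) / K ≤ ENNReal.ofReal b := by
  rw [← ENNReal.ofReal_sum_of_nonneg fun k _ => hx k]
  refine ENNReal.div_le_of_le_mul ?_
  rw [← ENNReal.ofReal_natCast, mul_comm, ← ENNReal.ofReal_mul (Nat.cast_nonneg K)]
  exact ENNReal.ofReal_le_ofReal h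

theorem frame_based_strong_stability_general
    {Ω : Type*} [MeasurableSpace Ω] (μ : Measure Ω) [IsProbabilityMeasure μ]
    (N T : ℕ) (hT : 1 ≤ T) (Λ : ℝ) (hΛ : Λ < 1)
    (q A : ℕ → Ω → ℕ)
    (hqmeas : ∀ k, Measurable (q k)) (hAmeas : ∀ k, Measurable (A k))
    (hq0 : ∀ ω, q 0 ω = 0)
    (hAbd : ∀ k ω, A (k + 1) ω ≤ N * T)
    (hAindep : ∀ k, IndepFun (A (k + 1))
      (fun ω => fun s : Fin (k + 1) => q (s : ℕ) ω) μ)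
    (hAmean : ∀ k, ∫ ω, (A (k + 1) ω : ℝ) ∂μ = Λ * T)
    (hevol : ∀ k ω, q (k + 1) ω = q k ω - T + A (k + 1) ω) :
    (∀ K : ℕ, 1 ≤ K →
      (∑ k ∈ Finset.range K, ∫⁻ ω, (q k ω : ℝ≥0∞) ∂μ) / (K : ℝ≥0∞)
        ≤ ENNReal.ofReal ((((N : ℝ) ^ 2 + 1) * T) / (2 * (1 - Λ)))) ∧
    limsup (fun K : ℕ =>
        (∑ k ∈ Finset.range K, ∫⁻ ω, (q k ω : ℝ≥0∞) ∂μ) / (K : ℝ≥0∞)) atTop < ⊤ := by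
  have hbound : ∀ K : ℕ, (∑ k ∈ Finset.range K, ∫⁻ ω, (q k ω : ℝ≥0∞) ∂μ) / (K : ℝ≥0∞)
      ≤ ENNReal.ofReal ((((N : ℝ) ^ 2 + 1) * T) / (2 * (1 - Λ))) := fun K => by
    simp_rw [fun k => lintegral_natCast_eq_ofReal_integral (μ := μ)
      (integrable_natCast_of_le (hqmeas k) (backlog_le_mul hq0 hAbd hevol k))]
    exact ENNReal.sum_ofReal_div_le (fun k => integral_nonneg fun ω => (q k ω).cast_nonneg)
      (sum_integral_backlog_le hT hΛ hqmeas hAmeas hq0 hAbd hAindep hAmean hevol K)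
  exact ⟨fun K _ => hbound K,
    (limsup_le_of_le (by isBoundedDefault) (.of_forall hbound)).trans_lt ENNReal.ofReal_lt_top⟩

/-- Frame-based scheduling with period-`T` occupancy information (policy ψ_T) in a
collocated network of `N` queues: the sampled backlog `q(k+1) = max(q(k) - T, 0) + A(k+1)`,
with frame arrivals bounded by `N·T`, independent of the past and of mean `Λ·T` with
`Λ < 1`, satisfies `(1/K) ∑_{k<K} E[q(k)] ≤ (N²+1)·T/(2(1-Λ))` for all `K ≥ 1`; in
particular the sampled backlog process is strongly stable and its time-averaged expectation
grows at most linearly in the frame length `T`. -/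
theorem frame_based_strong_stability
    {Ω : Type*} [MeasurableSpace Ω] (μ : Measure Ω) [IsProbabilityMeasure μ]
    (N T : ℕ) (hN : 1 ≤ N) (hT : 1 ≤ T) (Λ : ℝ) (hΛ : Λ < 1)
    (q A : ℕ → Ω → ℕ)
    (hqmeas : ∀ k, Measurable (q k)) (hAmeas : ∀ k, Measurable (A k))
    (hq0 : ∀ ω, q 0 ω = 0)
    (hAbd : ∀ k ω, A (k + 1) ω ≤ N * T)
    (hAindep : ∀ k, IndepFun (A (k + 1))
      (fun ω => fun s : Fin (k + 1) => q (s : ℕ) ω) μ)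
    (hAmean : ∀ k, ∫ ω, (A (k + 1) ω : ℝ) ∂μ = Λ * T)
    (hevol : ∀ k ω, q (k + 1) ω = q k ω - T + A (k + 1) ω) :
    (∀ K : ℕ, 1 ≤ K →
      (∑ k ∈ Finset.range K, ∫⁻ ω, (q k ω : ℝ≥0∞) ∂μ) / (K : ℝ≥0∞)
        ≤ ENNReal.ofReal ((((N : ℝ) ^ 2 + 1) * T) / (2 * (1 - Λ)))) ∧
    limsup (fun K : ℕ =>
        (∑ k ∈ Finset.range K, ∫⁻ ω, (q k ω : ℝ≥0∞) ∂μ) / (K : ℝ≥0∞)) atTop < ⊤ :=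
  frame_based_strong_stability_general μ N T hT Λ hΛ q A hqmeas hAmeas hq0 hAbd hAindep hAmean hevol
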